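/- arXiv:1706.05213 — 3 statements merged into one kernel-verified Lean document; each statement's English description precedes it below -/
import Mathlib

section
/- Let μ, ν > 0. Let W be a random variable with distribution function Ψ_{k−1}(t) = P(W < t), let α be exponentially distributed with rate μ and β exponentially distributed with rate ν, with W, α, β mutually independent. Define Y = max(0, W + β) − max(α, W) and Ψ_k(t) = P(Y < t). Then Ψ_k(t) = μν·e^{μt}·∫₀^∞∫₀^∞ Ψ_{k−1}(u − v)·e^{−μu−νv} du dv for t ≤ 0, and Ψ_k(t) = μν·e^{−νt}·∫₀^∞∫₀^∞ Ψ_{k−1}(u − v)·e^{−μu−νv} du dv + 1 − e^{−νt} for t > 0. -/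
/-!
For `t ≤ 0` and `β ≥ 0`, the event `Y < t` is the event `α > max(0, W + β) - t`; since `α` is
exponential and independent of `(W, β)`, memorylessness pulls out the factor `e^{μt}` and leaves
`P(W + β < α)`. For `t > 0` and `α ≥ 0`, the complementary event `Y ≥ t` is
`β ≥ t + max(0, α - W)`, and memorylessness of `β` gives `P(Y ≥ t) = e^{-νt} P(W + β ≥ α)`.
Finally, conditioning on the independent pair `(α, β)` gives
`P(W + β < α) = E Ψ_{k-1}(α - β) = μν ∫∫ Ψ_{k-1}(u - v) e^{-μu-νv} du dv`.
-/

open MeasureTheory ProbabilityTheory Set Real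

lemma sub_max_lt_iff_of_nonpos {a b w t : ℝ} (hb : 0 ≤ b) (ht : t ≤ 0) :
    max 0 (w + b) - max a w < t ↔ -t + max 0 (w + b) < a := by
  grind

lemma le_sub_max_iff_of_pos {a b w t : ℝ} (ha : 0 ≤ a) (ht : 0 < t) :
    t ≤ max 0 (w + b) - max a w ↔ t + max 0 (a - w) ≤ b := by
  grind

namespace ProbabilityTheory

section ExpMeasure

instance nullSingletonClass_expMeasure (r : ℝ) : NullSingletonClass (expMeasure r) :=
  nullSingletonClass_withDensity (exponentialPDF r)

variable {r : ℝ}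

lemma expMeasure_real_Iio (hr : 0 < r) (x : ℝ) :
    (expMeasure r).real (Iio x) = max 0 (1 - exp (-(r * x))) := by
  have := isProbabilityMeasure_expMeasure hr
  rw [measureReal_congr Iio_ae_eq_Iic, ← cdf_eq_real, cdf_expMeasure_eq hr]
  split_ifs with hx
  · rw [max_eq_right (sub_nonneg.2 (exp_le_one_iff.2 (by nlinarith)))]
  · rw [max_eq_left (sub_nonpos.2 (one_le_exp (by nlinarith)))]

lemma expMeasure_real_Ioi (hr : 0 < r) {x : ℝ} (hx : 0 ≤ x) :
    (expMeasure r).real (Ioi x) = exp (-(r * x)) := by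
  have := isProbabilityMeasure_expMeasure hr
  rw [← compl_Iic, probReal_compl_eq_one_sub measurableSet_Iic, ← cdf_eq_real,
    cdf_expMeasure_eq hr, if_pos hx, sub_sub_cancel]

lemma expMeasure_real_Ioi_add (hr : 0 < r) {s x : ℝ} (hs : 0 ≤ s) (hx : 0 ≤ x) :
    (expMeasure r).real (Ioi (s + x)) = exp (-(r * s)) * (expMeasure r).real (Ioi x) := by
  rw [expMeasure_real_Ioi hr (add_nonneg hs hx), expMeasure_real_Ioi hr hx, ← exp_add]
  ring_nf

lemma ae_pos_expMeasure (hr : 0 < r) : ∀ᵐ x ∂expMeasure r, 0 < x := by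
  have := isProbabilityMeasure_expMeasure hr
  rw [ae_iff, ← measureReal_eq_zero_iff]
  simp only [not_lt]
  change (expMeasure r).real (Iic 0) = 0
  rw [← cdf_eq_real, cdf_expMeasure_eq hr]
  simp

lemma integral_expMeasure (hr : 0 < r) (g : ℝ → ℝ) :
    ∫ x, g x ∂expMeasure r = ∫ x in Ioi 0, r * exp (-(r * x)) * g x := by
  change ∫ x, g x ∂volume.withDensity (exponentialPDF r) = _
  rw [integral_withDensity_eq_integral_toReal_smul (f := exponentialPDF r)
    (measurable_exponentialPDFReal r).ennreal_ofReal (by simp [exponentialPDF]),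
    ← integral_Ici_eq_integral_Ioi, ← integral_indicator measurableSet_Ici]
  refine integral_congr_ae (ae_of_all _ fun x => ?_)
  simp only [exponentialPDF_eq, smul_eq_mul]
  by_cases hx : 0 ≤ x
  · simp [hx, (mul_pos hr (exp_pos _)).le]
  · simp [hx]

end ExpMeasure

variable {Ω : Type*} [MeasurableSpace Ω] {P : Measure Ω}

lemma ae_pos_of_hasLaw_expMeasure {r : ℝ} (hr : 0 < r) {ξ : Ω → ℝ}
    (hξ : HasLaw ξ (expMeasure r) P) : ∀ᵐ ω ∂P, 0 < ξ ω :=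
  (hξ.ae_iff measurableSet_Ioi.mem).2 (ae_pos_expMeasure hr)

variable [IsProbabilityMeasure P]

lemma hasLaw_expMeasure_of_measure_lt {r : ℝ} (hr : 0 < r) {X : Ω → ℝ} (hX : Measurable X)
    (hcdf : ∀ t, (P {ω | X ω < t}).toReal = max 0 (1 - exp (-r * t))) :
    HasLaw X (expMeasure r) P where
  map_eq := by
    have := Measure.isProbabilityMeasure_map (μ := P) hX.aemeasurable
    have := isProbabilityMeasure_expMeasure hr
    refine ext_of_generate_finite _ (borel_eq_generateFrom_Iio ℝ) isPiSystem_Iio ?_ (by simp)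
    rintro _ ⟨t, rfl⟩
    rw [← ENNReal.toReal_eq_toReal_iff' (measure_ne_top _ _) (measure_ne_top _ _)]
    change (P.map X).real (Iio t) = (expMeasure r).real (Iio t)
    rw [map_measureReal_apply hX measurableSet_Iio, expMeasure_real_Iio hr, ← neg_mul]
    exact hcdf t

lemma measureReal_prodMk_mem_of_indepFun {𝓧 𝓨 : Type*} [MeasurableSpace 𝓧] [MeasurableSpace 𝓨]
    {ρ : Measure 𝓨} [IsFiniteMeasure ρ] {X : Ω → 𝓧} {Y : Ω → 𝓨} (hX : AEMeasurable X P)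
    (hY : HasLaw Y ρ P) (hXY : IndepFun X Y P) {S : Set (𝓧 × 𝓨)} (hS : MeasurableSet S) :
    P.real {ω | (X ω, Y ω) ∈ S} = ∫ ω, ρ.real (Prod.mk (X ω) ⁻¹' S) ∂P := by
  have hlaw := (indepFun_iff_hasLaw_prodMk_prod ⟨hX, rfl⟩ hY).1 hXY
  have hslice : Measurable fun x => ρ (Prod.mk x ⁻¹' S) := measurable_measure_prodMk_left hS
  rw [hlaw.measureReal_eq (p := (· ∈ S)) hS, measureReal_def, ofPred_mem_eq, Measure.prod_apply hS,
    ← integral_toReal hslice.aemeasurable (ae_of_all _ fun _ => measure_lt_top _ _),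
    integral_map hX hslice.ennreal_toReal.aestronglyMeasurable]
  rfl

lemma measureReal_le_eq_measureReal_lt_of_indepFun {ρ : Measure ℝ} [IsFiniteMeasure ρ]
    [NullSingletonClass ρ] {X ξ : Ω → ℝ} (hX : Measurable X) (hξ : HasLaw ξ ρ P)
    (hXξ : IndepFun X ξ P) :
    P.real {ω | X ω ≤ ξ ω} = P.real {ω | X ω < ξ ω} := by
  have hle := measureReal_prodMk_mem_of_indepFun hX.aemeasurable hξ hXξ
    (measurableSet_le measurable_fst measurable_snd)
  have hlt := measureReal_prodMk_mem_of_indepFun hX.aemeasurable hξ hXξ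
    (measurableSet_lt measurable_fst measurable_snd)
  refine hle.trans (Eq.trans ?_ hlt.symm)
  congr with ω
  exact measureReal_congr Ioi_ae_eq_Ici.symm

lemma measureReal_add_lt_of_hasLaw_expMeasure {r : ℝ} (hr : 0 < r) {X ξ : Ω → ℝ}
    (hX : Measurable X) (hξ : HasLaw ξ (expMeasure r) P) (hXξ : IndepFun X ξ P)
    (hX0 : ∀ ω, 0 ≤ X ω) {s : ℝ} (hs : 0 ≤ s) :
    P.real {ω | s + X ω < ξ ω} = exp (-(r * s)) * P.real {ω | X ω < ξ ω} := by
  have := isProbabilityMeasure_expMeasure hr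
  have hshift := measureReal_prodMk_mem_of_indepFun (S := {p | s + p.1 < p.2}) hX.aemeasurable
    hξ hXξ (measurableSet_lt (measurable_const.add measurable_fst) measurable_snd)
  have hlt := measureReal_prodMk_mem_of_indepFun hX.aemeasurable hξ hXξ
    (measurableSet_lt measurable_fst measurable_snd)
  refine hshift.trans (Eq.trans ?_ (congrArg _ hlt).symm)
  rw [← integral_const_mul]
  congr with ω
  exact expMeasure_real_Ioi_add hr hs (hX0 ω)

variable {W α β : Ω → ℝ}

lemma measureReal_add_lt_eq_integral_of_hasLaw_expMeasure {μ ν : ℝ} (hμ : 0 < μ) (hν : 0 < ν)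
    (hW : Measurable W) (hα : HasLaw α (expMeasure μ) P) (hβ : HasLaw β (expMeasure ν) P)
    (hαβ : IndepFun α β P) (hαβW : IndepFun (fun ω => (α ω, β ω)) W P) {Ψ : ℝ → ℝ}
    (hΨ : ∀ x, Ψ x = P.real {ω | W ω < x}) :
    P.real {ω | W ω + β ω < α ω} =
      μ * ν * ∫ u in Ioi 0, ∫ v in Ioi 0, Ψ (u - v) * exp (-μ * u - ν * v) := by
  have := isProbabilityMeasure_expMeasure hμ
  have := isProbabilityMeasure_expMeasure hν
  have hΨm : Measurable Ψ := by
    refine Monotone.measurable fun x y hxy => ?_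
    rw [hΨ, hΨ]
    exact measureReal_mono fun ω (hω : W ω < x) => hω.trans_le hxy
  have hΨint : Integrable (fun z : ℝ × ℝ => Ψ (z.1 - z.2))
      ((expMeasure μ).prod (expMeasure ν)) := by
    refine .of_bound (hΨm.comp (by fun_prop)).aestronglyMeasurable 1 (ae_of_all _ fun z => ?_)
    rw [hΨ, Real.norm_of_nonneg measureReal_nonneg]
    exact measureReal_le_one
  have hlaw := (indepFun_iff_hasLaw_prodMk_prod hα hβ).1 hαβ
  have hsub : IndepFun (fun ω => α ω - β ω) W P :=
    hαβW.comp (measurable_fst.sub measurable_snd) measurable_id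
  calc P.real {ω | W ω + β ω < α ω}
      = P.real {ω | W ω < α ω - β ω} := by simp_rw [lt_sub_iff_add_lt]
    _ = ∫ ω, Ψ (α ω - β ω) ∂P := by
      refine (measureReal_prodMk_mem_of_indepFun (hα.aemeasurable.sub hβ.aemeasurable)
        ⟨hW.aemeasurable, rfl⟩ hsub (measurableSet_lt measurable_snd measurable_fst)).trans ?_
      congr with ω
      rw [hΨ]
      exact map_measureReal_apply hW measurableSet_Iio
    _ = ∫ z, Ψ (z.1 - z.2) ∂(expMeasure μ).prod (expMeasure ν) :=
      hlaw.integral_comp (f := fun z => Ψ (z.1 - z.2)) hΨint.aestronglyMeasurable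
    _ = ∫ u, ∫ v, Ψ (u - v) ∂expMeasure ν ∂expMeasure μ := integral_prod _ hΨint
    _ = ∫ u in Ioi 0, μ * exp (-(μ * u)) * ∫ v in Ioi 0, ν * exp (-(ν * v)) * Ψ (u - v) := by
      simp_rw [integral_expMeasure hμ, integral_expMeasure hν]
    _ = μ * ν * ∫ u in Ioi 0, ∫ v in Ioi 0, Ψ (u - v) * exp (-μ * u - ν * v) := by
      simp_rw [← integral_const_mul]
      refine integral_congr_ae (ae_of_all _ fun u => integral_congr_ae (ae_of_all _ fun v => ?_))
      simp only [sub_eq_add_neg, exp_add]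
      ring_nf

lemma measureReal_sub_max_lt_of_nonpos {μ : ℝ} (hμ : 0 < μ) (hW : Measurable W)
    (hβm : Measurable β) (hα : HasLaw α (expMeasure μ) P) (hβ0 : ∀ᵐ ω ∂P, 0 ≤ β ω)
    (hind : IndepFun (fun ω => (W ω, β ω)) α P) {t : ℝ} (ht : t ≤ 0) :
    P.real {ω | max 0 (W ω + β ω) - max (α ω) (W ω) < t} =
      exp (μ * t) * P.real {ω | W ω + β ω < α ω} := by
  have hmax : IndepFun (fun ω => max 0 (W ω + β ω)) α P :=
    hind.comp (φ := fun p : ℝ × ℝ => max 0 (p.1 + p.2)) (by fun_prop) measurable_id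
  calc P.real {ω | max 0 (W ω + β ω) - max (α ω) (W ω) < t}
      = P.real {ω | -t + max 0 (W ω + β ω) < α ω} := by
        refine measureReal_congr (Filter.eventuallyEq_set.2 ?_)
        filter_upwards [hβ0] with ω hω using sub_max_lt_iff_of_nonpos hω ht
    _ = exp (μ * t) * P.real {ω | max 0 (W ω + β ω) < α ω} := by
        rw [measureReal_add_lt_of_hasLaw_expMeasure hμ (by fun_prop) hα hmax
          (fun _ => le_max_left _ _) (neg_nonneg.2 ht), mul_neg, neg_neg]
    _ = exp (μ * t) * P.real {ω | W ω + β ω < α ω} := by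
        refine congrArg _ (measureReal_congr (Filter.eventuallyEq_set.2 ?_))
        filter_upwards [ae_pos_of_hasLaw_expMeasure hμ hα] with ω hω
        simp [hω]

lemma measureReal_sub_max_lt_of_pos {ν : ℝ} (hν : 0 < ν) (hW : Measurable W)
    (hαm : Measurable α) (hβm : Measurable β) (hβ : HasLaw β (expMeasure ν) P)
    (hα0 : ∀ᵐ ω ∂P, 0 ≤ α ω) (hind : IndepFun (fun ω => (α ω, W ω)) β P) {t : ℝ} (ht : 0 < t) :
    P.real {ω | max 0 (W ω + β ω) - max (α ω) (W ω) < t} =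
      1 - exp (-(ν * t)) * (1 - P.real {ω | W ω + β ω < α ω}) := by
  have := isProbabilityMeasure_expMeasure hν
  have hmax : IndepFun (fun ω => max 0 (α ω - W ω)) β P :=
    hind.comp (φ := fun p : ℝ × ℝ => max 0 (p.1 - p.2)) (by fun_prop) measurable_id
  have hshift : IndepFun (fun ω => t + max 0 (α ω - W ω)) β P :=
    hind.comp (φ := fun p : ℝ × ℝ => t + max 0 (p.1 - p.2)) (by fun_prop) measurable_id
  calc P.real {ω | max 0 (W ω + β ω) - max (α ω) (W ω) < t}
      = 1 - P.real {ω | t ≤ max 0 (W ω + β ω) - max (α ω) (W ω)} := by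
        rw [← probReal_compl_eq_one_sub (measurableSet_le (by fun_prop) (by fun_prop))]
        simp only [compl_ofPred, not_le]
    _ = 1 - P.real {ω | t + max 0 (α ω - W ω) ≤ β ω} := by
        refine congrArg _ (measureReal_congr (Filter.eventuallyEq_set.2 ?_))
        filter_upwards [hα0] with ω hω using le_sub_max_iff_of_pos hω ht
    _ = 1 - exp (-(ν * t)) * P.real {ω | max 0 (α ω - W ω) ≤ β ω} := by
        rw [measureReal_le_eq_measureReal_lt_of_indepFun (by fun_prop) hβ hshift,
          measureReal_add_lt_of_hasLaw_expMeasure hν (by fun_prop) hβ hmax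
            (fun _ => le_max_left _ _) ht.le,
          measureReal_le_eq_measureReal_lt_of_indepFun (by fun_prop) hβ hmax]
    _ = 1 - exp (-(ν * t)) * (1 - P.real {ω | W ω + β ω < α ω}) := by
        rw [← probReal_compl_eq_one_sub (measurableSet_lt (by fun_prop) (by fun_prop))]
        refine congrArg _ (congrArg _ (measureReal_congr (Filter.eventuallyEq_set.2 ?_)))
        filter_upwards [ae_pos_of_hasLaw_expMeasure hν hβ] with ω hω
        simp only [mem_ofPred_eq, mem_compl_iff, not_lt, max_le_iff, hω.le, true_and]
        exact sub_le_iff_le_add'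

end ProbabilityTheory

/-- One step of the recursion: if `W`, `α`, `β` are mutually independent,
`α`, `β` exponential with rates `μ`, `ν`, `Ψ_{k-1}(t) = P(W < t)`, and
`Y = max(0, W + β) - max(α, W)`, then the distribution function `Ψ_k(t) = P(Y < t)`
is given by the stated double-integral formulas. -/
theorem one_step_recursion {Ω : Type*} [MeasurableSpace Ω]
    (P : Measure Ω) [IsProbabilityMeasure P]
    (μ ν : ℝ) (hμ : 0 < μ) (hν : 0 < ν)
    (W α β : Ω → ℝ) (hmW : Measurable W) (hmα : Measurable α) (hmβ : Measurable β)
    (hindep : iIndepFun (m := fun _ : Fin 3 => Real.measurableSpace) ![W, α, β] P)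
    (hα : ∀ t : ℝ, (P {ω | α ω < t}).toReal = max 0 (1 - Real.exp (-μ*t)))
    (hβ : ∀ t : ℝ, (P {ω | β ω < t}).toReal = max 0 (1 - Real.exp (-ν*t)))
    (Ψprev : ℝ → ℝ) (hΨprev : ∀ t : ℝ, Ψprev t = (P {ω | W ω < t}).toReal)
    (Y : Ω → ℝ) (hY : ∀ ω, Y ω = max 0 (W ω + β ω) - max (α ω) (W ω)) :
    ∀ t : ℝ,
      (t ≤ 0 → (P {ω | Y ω < t}).toReal =
        μ * ν * Real.exp (μ*t) *
          ∫ u in Set.Ioi (0:ℝ), ∫ v in Set.Ioi (0:ℝ), Ψprev (u - v) * Real.exp (-μ*u - ν*v)) ∧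
      (0 < t → (P {ω | Y ω < t}).toReal =
        μ * ν * Real.exp (-ν*t) *
          (∫ u in Set.Ioi (0:ℝ), ∫ v in Set.Ioi (0:ℝ), Ψprev (u - v) * Real.exp (-μ*u - ν*v))
          + 1 - Real.exp (-ν*t)) := by
  intro t
  have hmeas : ∀ i, Measurable (![W, α, β] i) := fun i => by fin_cases i <;> assumption
  have hαlaw := hasLaw_expMeasure_of_measure_lt hμ hmα hα
  have hβlaw := hasLaw_expMeasure_of_measure_lt hν hmβ hβ
  have hWβ_α : IndepFun (fun ω => (W ω, β ω)) α P :=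
    hindep.indepFun_prodMk hmeas 0 2 1 (by decide) (by decide)
  have hαW_β : IndepFun (fun ω => (α ω, W ω)) β P :=
    hindep.indepFun_prodMk hmeas 1 0 2 (by decide) (by decide)
  have hαβ_W : IndepFun (fun ω => (α ω, β ω)) W P :=
    hindep.indepFun_prodMk hmeas 1 2 0 (by decide) (by decide)
  have hαβ : IndepFun α β P := hindep.indepFun (by decide : (1 : Fin 3) ≠ 2)
  have hkey := measureReal_add_lt_eq_integral_of_hasLaw_expMeasure hμ hν hmW hαlaw hβlaw hαβ
    hαβ_W hΨprev
  simp only [hY, ← measureReal_def]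
  refine ⟨fun ht => ?_, fun ht => ?_⟩
  · rw [measureReal_sub_max_lt_of_nonpos hμ hmW hmβ hαlaw
      ((ae_pos_of_hasLaw_expMeasure hν hβlaw).mono fun _ h => h.le) hWβ_α ht, hkey]
    ring
  · rw [measureReal_sub_max_lt_of_pos hν hmW hmα hmβ hβlaw
      ((ae_pos_of_hasLaw_expMeasure hμ hαlaw).mono fun _ h => h.le) hαW_β ht, hkey, neg_mul]
    ring
end

section
/- Let μ, ν > 0 and define Ψ₁ : ℝ → ℝ by Ψ₁(t) = (ν/(μ+ν))·e^{μt} for t ≤ 0 and Ψ₁(t) = 1 − (μ/(μ+ν))·e^{−νt} for t > 0. Then μν·∫₀^∞∫₀^∞ Ψ₁(u − v)·e^{−μu−νv} du dv = ν²(3μ + ν)/(μ + ν)³. -/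
/-!
For fixed `u ≥ 0` split the inner integral at `v = u`. On `(0, u]` the argument `u - v` is
nonnegative, and there `Ψ₁` is given by its second formula also at `0` (it is continuous), so the
integrand is `e^{-μu} e^{-νv} - μ/(μ+ν) e^{-(μ+ν)u}`; on `(u, ∞)` it is `ν/(μ+ν) e^{-(μ+ν)v}`.
The inner integral is therefore a combination of `e^{-μu}`, `e^{-(μ+ν)u}` and `u e^{-(μ+ν)u}`,
whose integrals over `(0, ∞)` are `1/μ`, `1/(μ+ν)` and `1/(μ+ν)²`.
-/
open MeasureTheory Real Set

lemma integral_exp_neg_mul_Ioi {b : ℝ} (hb : 0 < b) (a : ℝ) :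
    ∫ x in Ioi a, exp (-b * x) = exp (-b * a) / b := by
  rw [integral_exp_mul_Ioi (neg_lt_zero.2 hb)]
  ring

lemma intervalIntegral_exp_neg_mul {b : ℝ} (hb : b ≠ 0) (u : ℝ) :
    ∫ x in 0..u, exp (-b * x) = (1 - exp (-b * u)) / b := by
  rw [intervalIntegral.integral_comp_mul_left (fun x => exp x) (neg_ne_zero.2 hb),
    integral_exp]
  simp only [inv_neg, neg_mul, mul_zero, exp_zero, smul_eq_mul]
  field_simp
  ring

lemma integrableOn_mul_exp_neg_mul_Ioi {b : ℝ} (hb : 0 < b) :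
    IntegrableOn (fun x => x * exp (-b * x)) (Ioi 0) :=
  (integrableOn_rpow_mul_exp_neg_mul_rpow (s := 1) (p := 1) (by norm_num) one_pos hb).congr_fun
    (fun x _ => by simp) measurableSet_Ioi

lemma integral_mul_exp_neg_mul_Ioi {b : ℝ} (hb : 0 < b) :
    ∫ x in Ioi 0, x * exp (-b * x) = 1 / b ^ 2 := by
  have h := integral_rpow_mul_exp_neg_mul_Ioi two_pos hb
  norm_num at h
  simpa only [neg_mul, one_div] using h

noncomputable def psiOne (μ ν t : ℝ) : ℝ :=
  if t ≤ 0 then ν / (μ + ν) * exp (μ * t) else 1 - μ / (μ + ν) * exp (-ν * t)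

variable {μ ν : ℝ}

lemma psiOne_of_nonpos {t : ℝ} (ht : t ≤ 0) : psiOne μ ν t = ν / (μ + ν) * exp (μ * t) :=
  if_pos ht

lemma psiOne_of_nonneg (hμν : μ + ν ≠ 0) {t : ℝ} (ht : 0 ≤ t) :
    psiOne μ ν t = 1 - μ / (μ + ν) * exp (-ν * t) := by
  rcases ht.lt_or_eq with ht | rfl
  · exact if_neg ht.not_ge
  · rw [psiOne_of_nonpos le_rfl]
    field_simp
    simp

lemma psiOne_sub_mul_exp_of_le (hμν : μ + ν ≠ 0) {u v : ℝ} (h : v ≤ u) :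
    psiOne μ ν (u - v) * exp (-μ * u - ν * v)
      = exp (-μ * u) * exp (-ν * v) - μ / (μ + ν) * exp (-(μ + ν) * u) := by
  rw [psiOne_of_nonneg hμν (sub_nonneg.2 h), sub_mul, one_mul, mul_assoc, ← exp_add, ← exp_add]
  ring_nf

lemma psiOne_sub_mul_exp_of_ge {u v : ℝ} (h : u ≤ v) :
    psiOne μ ν (u - v) * exp (-μ * u - ν * v) = ν / (μ + ν) * exp (-(μ + ν) * v) := by
  rw [psiOne_of_nonpos (sub_nonpos.2 h), mul_assoc, ← exp_add]
  ring_nf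

lemma integral_psiOne_sub_mul_exp_Ioc (hμν : μ + ν ≠ 0) (hν : ν ≠ 0) {u : ℝ} (hu : 0 ≤ u) :
    ∫ v in Ioc 0 u, psiOne μ ν (u - v) * exp (-μ * u - ν * v)
      = exp (-μ * u) * ((1 - exp (-ν * u)) / ν) - μ / (μ + ν) * exp (-(μ + ν) * u) * u := by
  rw [setIntegral_congr_fun measurableSet_Ioc fun v hv => psiOne_sub_mul_exp_of_le hμν hv.2,
    ← intervalIntegral.integral_of_le hu,
    intervalIntegral.integral_sub (Continuous.intervalIntegrable (by fun_prop) _ _)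
      intervalIntegrable_const,
    intervalIntegral.integral_const_mul, intervalIntegral_exp_neg_mul hν,
    intervalIntegral.integral_const, smul_eq_mul]
  ring

lemma integral_psiOne_sub_mul_exp_Ioi (hμν : 0 < μ + ν) (u : ℝ) :
    ∫ v in Ioi u, psiOne μ ν (u - v) * exp (-μ * u - ν * v)
      = ν / (μ + ν) ^ 2 * exp (-(μ + ν) * u) := by
  rw [setIntegral_congr_fun measurableSet_Ioi fun v hv => psiOne_sub_mul_exp_of_ge hv.le,
    integral_const_mul, integral_exp_neg_mul_Ioi hμν]
  field_simp

lemma integral_psiOne_sub_mul_exp (hμ : 0 < μ) (hν : 0 < ν) {u : ℝ} (hu : 0 ≤ u) :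
    ∫ v in Ioi 0, psiOne μ ν (u - v) * exp (-μ * u - ν * v)
      = exp (-μ * u) / ν + (ν / (μ + ν) ^ 2 - 1 / ν) * exp (-(μ + ν) * u)
        - μ / (μ + ν) * (u * exp (-(μ + ν) * u)) := by
  have hμν : 0 < μ + ν := add_pos hμ hν
  have h_near : IntegrableOn (fun v => psiOne μ ν (u - v) * exp (-μ * u - ν * v)) (Ioc 0 u) :=
    (Continuous.integrableOn_Ioc (by fun_prop : Continuous fun v =>
      exp (-μ * u) * exp (-ν * v) - μ / (μ + ν) * exp (-(μ + ν) * u))).congr_fun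
      (fun v hv => (psiOne_sub_mul_exp_of_le hμν.ne' hv.2).symm) measurableSet_Ioc
  have h_far : IntegrableOn (fun v => psiOne μ ν (u - v) * exp (-μ * u - ν * v)) (Ioi u) :=
    IntegrableOn.congr_fun ((exp_neg_integrableOn_Ioi u hμν).const_mul _)
      (fun v hv => (psiOne_sub_mul_exp_of_ge hv.le).symm) measurableSet_Ioi
  rw [← Ioc_union_Ioi_eq_Ioi hu, setIntegral_union Ioc_disjoint_Ioi_same measurableSet_Ioi
      h_near h_far, integral_psiOne_sub_mul_exp_Ioc hμν.ne' hν.ne' hu,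
    integral_psiOne_sub_mul_exp_Ioi hμν, show -(μ + ν) * u = -μ * u + -ν * u by ring, exp_add]
  field_simp
  ring

/-- The double integral of `Ψ₁(u-v)·e^{-μu-νv}` over the positive quadrant,
scaled by `μν`, equals `ν²(3μ+ν)/(μ+ν)³`. -/
theorem double_integral_psi_one (μ ν : ℝ) (hμ : 0 < μ) (hν : 0 < ν)
    (Ψ₁ : ℝ → ℝ)
    (hΨ₁ : ∀ t : ℝ, Ψ₁ t = if t ≤ 0 then ν/(μ+ν) * Real.exp (μ*t)
      else 1 - μ/(μ+ν) * Real.exp (-ν*t)) :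
    μ * ν * ∫ u in Set.Ioi (0:ℝ), ∫ v in Set.Ioi (0:ℝ), Ψ₁ (u - v) * Real.exp (-μ*u - ν*v)
      = ν^2*(3*μ+ν)/(μ+ν)^3 := by
  obtain rfl : Ψ₁ = psiOne μ ν := funext hΨ₁
  have hμν : 0 < μ + ν := add_pos hμ hν
  have h₁ := (exp_neg_integrableOn_Ioi 0 hμ).div_const ν
  have h₂ := (exp_neg_integrableOn_Ioi 0 hμν).const_mul (ν / (μ + ν) ^ 2 - 1 / ν)
  have h₃ := (integrableOn_mul_exp_neg_mul_Ioi hμν).const_mul (μ / (μ + ν))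
  rw [setIntegral_congr_fun measurableSet_Ioi fun u hu => integral_psiOne_sub_mul_exp hμ hν hu.le,
    integral_sub (by exact h₁.add h₂) h₃, integral_add h₁ h₂, integral_div, integral_const_mul,
    integral_const_mul, integral_exp_neg_mul_Ioi hμ, integral_exp_neg_mul_Ioi hμν,
    integral_mul_exp_neg_mul_Ioi hμν]
  simp only [mul_zero, exp_zero]
  field_simp
  ring
end

section
/- Let μ, ν > 0. Let W, α, β be mutually independent random variables with α exponentially distributed with rate μ and β exponentially distributed with rate ν, and let Ψ(t) = P(W < t). Then for all real t and all u, v ≥ 0: P(max(0, W + v) − max(u, W) < t) equals 1 − Ψ(−t) if u ≤ −t and v < t; equals 1 if u > −t and v < t; equals 0 if u ≤ −t and v ≥ t; and equals Ψ(u − v + t) if u > −t and v ≥ t. -/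
open MeasureTheory ProbabilityTheory

/-! For fixed `u, v ≥ 0` the event `max 0 (W + v) - max u W < t` depends on `W` alone, and
`max_sub_max_le_max` bounds `max 0 (w + v) - max u w` between `min (-u) v` and `max (-u) v`.
So the event is sure when `max (-u) v < t`, impossible when `t ≤ min (-u) v`, and in the
remaining case `-t < u`, `t ≤ v` it is exactly `W < u - v + t`. The first case is empty since
`u ≤ -t` and `v < t` contradict `u, v ≥ 0`. -/

theorem max_zero_add_sub_max_lt_iff {α : Type*} [Field α] [LinearOrder α] [IsStrictOrderedRing α]
    {u v t x : α} (htu : -t < u) (htv : t ≤ v) :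
    max 0 (x + v) - max u x < t ↔ x < u - v + t := by
  constructor
  · intro h
    by_contra! hx
    have hmax : max u x ≤ x + v - t := max_le (by linarith) (by linarith)
    linarith [le_max_right 0 (x + v)]
  · intro hx
    rw [max_eq_left (by linarith : x ≤ u), sub_lt_iff_lt_add]
    exact max_lt (by linarith) (by linarith)

theorem conditional_probability_four_cases_general {Ω : Type*} [MeasurableSpace Ω]
    (P : Measure Ω) [IsProbabilityMeasure P]
    (W : Ω → ℝ)
    (Ψ : ℝ → ℝ) (hΨ : ∀ t : ℝ, Ψ t = (P {ω | W ω < t}).toReal) :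
    ∀ t u v : ℝ, 0 ≤ u → 0 ≤ v →
      (u ≤ -t → v < t →
        (P {ω | max 0 (W ω + v) - max u (W ω) < t}).toReal = 1 - Ψ (-t)) ∧
      (-t < u → v < t →
        (P {ω | max 0 (W ω + v) - max u (W ω) < t}).toReal = 1) ∧
      (u ≤ -t → t ≤ v →
        (P {ω | max 0 (W ω + v) - max u (W ω) < t}).toReal = 0) ∧
      (-t < u → t ≤ v →
        (P {ω | max 0 (W ω + v) - max u (W ω) < t}).toReal = Ψ (u - v + t)) := by
  intro t u v hu hv
  refine ⟨fun _ _ => by exfalso; linarith, fun htu htv => ?_, fun htu htv => ?_,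
    fun htu htv => ?_⟩
  · have hsure : {ω | max 0 (W ω + v) - max u (W ω) < t} = Set.univ :=
      Set.eq_univ_of_forall fun ω => (max_sub_max_le_max 0 (W ω + v) u (W ω)).trans_lt
        (max_lt (by linarith) (by linarith))
    simp [hsure]
  · have hnull : {ω | max 0 (W ω + v) - max u (W ω) < t} = ∅ :=
      Set.eq_empty_of_forall_notMem fun ω => not_lt.2 <|
        show t ≤ max 0 (W ω + v) - max u (W ω) by
          have hbound : max (u - 0) (W ω - (W ω + v)) ≤ -t := max_le (by linarith) (by linarith)
          linarith [max_sub_max_le_max u (W ω) 0 (W ω + v)]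
    simp [hnull]
  · simp only [max_zero_add_sub_max_lt_iff htu htv, hΨ]

/-- The conditional-probability computation underlying the recursion:
for realized values `u, v ≥ 0` of the exponential entries,
`P(max(0, W + v) - max(u, W) < t)` is given by the stated four-case formula, where
`Ψ(t) = P(W < t)`. -/
theorem conditional_probability_four_cases {Ω : Type*} [MeasurableSpace Ω]
    (P : Measure Ω) [IsProbabilityMeasure P]
    (μ ν : ℝ) (hμ : 0 < μ) (hν : 0 < ν)
    (W α β : Ω → ℝ) (hmW : Measurable W) (hmα : Measurable α) (hmβ : Measurable β)
    (hindep : iIndepFun (m := fun _ : Fin 3 => Real.measurableSpace) ![W, α, β] P)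
    (hα : ∀ t : ℝ, (P {ω | α ω < t}).toReal = max 0 (1 - Real.exp (-μ*t)))
    (hβ : ∀ t : ℝ, (P {ω | β ω < t}).toReal = max 0 (1 - Real.exp (-ν*t)))
    (Ψ : ℝ → ℝ) (hΨ : ∀ t : ℝ, Ψ t = (P {ω | W ω < t}).toReal) :
    ∀ t u v : ℝ, 0 ≤ u → 0 ≤ v →
      (u ≤ -t → v < t →
        (P {ω | max 0 (W ω + v) - max u (W ω) < t}).toReal = 1 - Ψ (-t)) ∧
      (-t < u → v < t →
        (P {ω | max 0 (W ω + v) - max u (W ω) < t}).toReal = 1) ∧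
      (u ≤ -t → t ≤ v →
        (P {ω | max 0 (W ω + v) - max u (W ω) < t}).toReal = 0) ∧
      (-t < u → t ≤ v →
        (P {ω | max 0 (W ω + v) - max u (W ω) < t}).toReal = Ψ (u - v + t)) :=
  conditional_probability_four_cases_general P W Ψ hΨ
end
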